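/- Let Â, B̂, Ĉ be change actions, with the disjoint union change action on A ⊎ B having changes ΔA × ΔB and action inl a ⊕ (δa, δb) = inl (a ⊕ δa), inr b ⊕ (δa, δb) = inr (b ⊕ δb). If f : A → C and g : B → C are differentiable, then the copairing [f, g] : A ⊎ B → C is differentiable. -/
import Mathlib


/-- A change action: a base set `A`, a monoid of changes `Δ`, and a monoid action `act`. -/
structure ChangeAction (A : Type*) (Δ : Type*) where
  mul : Δ → Δ → Δ
  one : Δ
  mul_assoc : ∀ x y z : Δ, mul (mul x y) z = mul x (mul y z)
  one_mul : ∀ x : Δ, mul one x = x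
  mul_one : ∀ x : Δ, mul x one = x
  act : A → Δ → A
  act_one : ∀ a : A, act a one = a
  act_mul : ∀ (a : A) (x y : Δ), act a (mul x y) = act (act a x) y

/-- `f'` is a derivative of `f`: `f (a ⊕ δ) = f a ⊕ f' a δ`. -/
def IsDerivative {A ΔA B ΔB : Type*} (CA : ChangeAction A ΔA) (CB : ChangeAction B ΔB)
    (f : A → B) (f' : A → ΔA → ΔB) : Prop :=
  ∀ (a : A) (δ : ΔA), f (CA.act a δ) = CB.act (f a) (f' a δ)

/-- `f` is differentiable: some derivative exists. -/
def CDifferentiable {A ΔA B ΔB : Type*} (CA : ChangeAction A ΔA) (CB : ChangeAction B ΔB)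
    (f : A → B) : Prop :=
  ∃ f', IsDerivative CA CB f f'

/-- The disjoint-union change action: changes are pairs, acting on each summand. -/
def ChangeAction.sum {A ΔA B ΔB : Type*}
    (CA : ChangeAction A ΔA) (CB : ChangeAction B ΔB) :
    ChangeAction (A ⊕ B) (ΔA × ΔB) where
  mul x y := (CA.mul x.1 y.1, CB.mul x.2 y.2)
  one := (CA.one, CB.one)
  mul_assoc x y z := by simp [CA.mul_assoc, CB.mul_assoc]
  one_mul x := by simp [CA.one_mul, CB.one_mul]
  mul_one x := by simp [CA.mul_one, CB.mul_one]
  act x δ :=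
    match x with
    | Sum.inl a => Sum.inl (CA.act a δ.1)
    | Sum.inr b => Sum.inr (CB.act b δ.2)
  act_one x := by cases x <;> simp [CA.act_one, CB.act_one]
  act_mul x δ ε := by cases x <;> simp [CA.act_mul, CB.act_mul]

/-- The copairing of differentiable functions is differentiable. -/
theorem sum_copair_differentiable {A ΔA B ΔB C ΔC : Type*}
    (CA : ChangeAction A ΔA) (CB : ChangeAction B ΔB) (CC : ChangeAction C ΔC)
    (f : A → C) (g : B → C)
    (hf : CDifferentiable CA CC f) (hg : CDifferentiable CB CC g) :
    CDifferentiable (CA.sum CB) CC (Sum.elim f g) := by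
  obtain ⟨f', hf'⟩ := hf
  obtain ⟨g', hg'⟩ := hg
  refine ⟨fun x δ => match x with
    | Sum.inl a => f' a δ.1
    | Sum.inr b => g' b δ.2, fun x δ => ?_⟩
  cases x
  · exact hf' _ _
  · exact hg' _ _
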